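/- arXiv:2202.10167 — 2 statements merged into one kernel-verified Lean document; each statement's English description precedes it below -/
import Mathlib

section
/- If a monic OPS (P_n) with P_n(z)=z^n+f_n z^{n-1}+… (f_n = −∑_{j=0}^{n−1} B_j) satisfies (az^2+bz+c)·D_q P_n = a_n S_q P_{n+1} + b_n S_q P_n + c_n S_q P_{n−1}, then comparing the coefficients of z^n yields α_n α_{n+1} b_n = γ_n(a α_n B_n + b α_{n+1}) + aα ∑_{j=0}^{n−1} B_j for all n≥0. -/
open Polynomial Finset

noncomputable section

/-- The q-quadratic lattice variable: z = x(s) = (q^s + q^{-s})/2, with w = q^s. -/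
def latX (w : ℂ) : ℂ := (w + w⁻¹) / 2

/-- Askey-Wilson divided-difference operator, acting on functions of w = q^s,
    with r = q^{1/2}. -/
def Dq (r : ℂ) (u : ℂ → ℂ) (w : ℂ) : ℂ :=
  (u (r * w) - u (w / r)) / (latX (r * w) - latX (w / r))

/-- Averaging operator. -/
def Sq (r : ℂ) (u : ℂ → ℂ) (w : ℂ) : ℂ :=
  (u (r * w) + u (w / r)) / 2

/-- The function of w = q^s associated to a polynomial in z. -/
def pl (p : Polynomial ℂ) : ℂ → ℂ := fun w => p.eval (latX w)

/-- γ_n = (q^{n/2} - q^{-n/2})/(q^{1/2} - q^{-1/2}), with r = q^{1/2}. -/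
def gam (r : ℂ) (n : ℕ) : ℂ := (r ^ n - r⁻¹ ^ n) / (r - r⁻¹)

/-- α_n = (q^{n/2} + q^{-n/2})/2, with r = q^{1/2}. -/
def al (r : ℂ) (n : ℕ) : ℂ := (r ^ n + r⁻¹ ^ n) / 2

end

/-!
On the lattice `z = x(s) = (w + w⁻¹)/2` the Chebyshev polynomials diagonalise both operators:
`S_q T_n = α_n T_n` and `D_q T_n = γ_n U_{n-1}`. Expanding in the Chebyshev basis, and using that
`T_n` and `U_n` have no `z^{n-1}` term, the two top coefficients of `S_q p` are those of `p`
times `α_n, α_{n-1}`, and the `z^{n-1}, z^{n-2}` coefficients of `D_q p` are `γ_n, γ_{n-1}` times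
the `z^n, z^{n-1}` coefficients of `p`. Comparing coefficients of `z^n` in the structure relation,
with `f_n = -∑ B_j` read off from the recurrence, and using `γ_{n+1} α_{n+1} - γ_n α_{n+2} = α`,
gives the formula for `b_n`.
-/

theorem Polynomial.coeff_eq_zero_of_eval_neg {K : Type*} [Field K] [CharZero K] {p : K[X]}
    {j : ℕ} (h : ∀ x, p.eval (-x) = (-1) ^ (j + 1) * p.eval x) : p.coeff j = 0 := by
  have hcomp : p.comp (C (-1) * X) = C ((-1) ^ (j + 1)) * p :=
    Polynomial.funext fun x => by simpa using h x
  have hj := congrArg (coeff · j) hcomp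
  simp only [comp_C_mul_X_coeff, coeff_C_mul, pow_succ] at hj
  have h2 : (2 : K) * (-1) ^ j * p.coeff j = 0 := by linear_combination hj
  simpa using h2

theorem Polynomial.degree_C_mul_add_lt {R : Type*} [Semiring R] {p q : R[X]} {n : ℕ}
    (hp : p.degree < n) (hq : q.degree < n) (x : R) : (C x * p + q).degree < n := by
  rw [← mem_degreeLT, ← smul_eq_C_mul] at *
  exact add_mem (Submodule.smul_mem _ x hp) hq

namespace Polynomial.Chebyshev

variable {K : Type*} [Field K] [CharZero K]

theorem coeff_T_natCast_self (n : ℕ) : (T K n).coeff n = 2 ^ (n - 1) := by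
  simpa using (T K n).coeff_natDegree

theorem coeff_U_natCast_self (n : ℕ) : (U K n).coeff n = 2 ^ n := by
  simpa using (U K n).coeff_natDegree

theorem coeff_T_succ_self (n : ℕ) : (T K (n + 1 : ℕ)).coeff n = 0 :=
  coeff_eq_zero_of_eval_neg fun x => by rw [T_eval_neg, Int.cast_negOnePow_natCast]

theorem coeff_U_succ_self (n : ℕ) : (U K (n + 1 : ℕ)).coeff n = 0 :=
  coeff_eq_zero_of_eval_neg fun x => by rw [U_eval_neg, Int.cast_negOnePow_natCast]

end Polynomial.Chebyshev

open Polynomial.Chebyshev (T U)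

theorem exists_eq_C_mul_T_add {K : Type*} [Field K] [CharZero K] {p : K[X]} {n : ℕ}
    (hp : p.degree < n + 1) :
    ∃ (x : K) (q : K[X]), p = C x * T K n + q ∧ q.degree < n := by
  refine ⟨p.coeff n / 2 ^ (n - 1), p - C (p.coeff n / 2 ^ (n - 1)) * T K n, by ring, ?_⟩
  rw [degree_lt_iff_coeff_zero]
  intro m hm
  rw [coeff_sub, coeff_C_mul]
  rcases hm.eq_or_lt with rfl | hm
  · rw [Chebyshev.coeff_T_natCast_self]
    field_simp
    ring
  · rw [coeff_eq_zero_of_degree_lt (hp.trans_le (by exact_mod_cast hm)),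
      coeff_eq_zero_of_natDegree_lt (p := T K n) (by simpa using hm)]
    ring

theorem ne_zero_of_sub_inv_ne_zero {K : Type*} [Field K] {x : K} (h : x - x⁻¹ ≠ 0) :
    x ≠ 0 := by
  rintro rfl
  simp at h

theorem sub_inv_ne_zero {K : Type*} [Field K] {x : K} (hx : x ≠ 0) (hx2 : x ^ 2 ≠ 1) :
    x - x⁻¹ ≠ 0 := fun h => hx2 (by linear_combination x * h + mul_inv_cancel₀ hx)

theorem T_eval_latX {w : ℂ} (hw : w ≠ 0) :
    ∀ n : ℕ, (T ℂ n).eval (latX w) = (w ^ n + w⁻¹ ^ n) / 2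
  | 0 => by simp
  | 1 => by simp [latX]
  | n + 2 => by
    have h1 := T_eval_latX hw (n + 1)
    have h0 := T_eval_latX hw n
    push_cast at h1 ⊢
    simp only [Chebyshev.T_add_two, eval_sub, eval_mul, eval_X, eval_ofNat]
    rw [h1, h0, latX]
    linear_combination (w ^ n + w⁻¹ ^ n) / 2 * mul_inv_cancel₀ hw

theorem U_eval_latX {w : ℂ} (hw : w ≠ 0) :
    ∀ n : ℕ, (w - w⁻¹) * (U ℂ n).eval (latX w) = w ^ (n + 1) - w⁻¹ ^ (n + 1)
  | 0 => by simp
  | 1 => by simp [latX]; field_simp; ring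
  | n + 2 => by
    have h1 := U_eval_latX hw (n + 1)
    have h0 := U_eval_latX hw n
    push_cast at h1 ⊢
    simp only [Chebyshev.U_add_two, eval_sub, eval_mul, eval_X, eval_ofNat]
    unfold latX at h1 h0 ⊢
    linear_combination (w + w⁻¹) * h1 - h0 + (w ^ (n + 1) - w⁻¹ ^ (n + 1)) * mul_inv_cancel₀ hw

theorem latX_natCast_add_two_injective : Function.Injective fun k : ℕ => latX (k + 2) := by
  intro k l hkl
  have hk : (k : ℂ) + 2 ≠ 0 := by norm_cast
  have hl : (l : ℂ) + 2 ≠ 0 := by norm_cast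
  have key : ((k : ℂ) - l) * (((k : ℂ) + 2) * ((l : ℂ) + 2) - 1) = 0 := by
    simp only [latX] at hkl
    field_simp at hkl
    linear_combination hkl
  rcases mul_eq_zero.mp key with h | h
  · exact_mod_cast sub_eq_zero.mp h
  · have : ((k + 2) * (l + 2) : ℕ) = 1 := by exact_mod_cast sub_eq_zero.mp h
    nlinarith

theorem Polynomial.eq_of_eval_latX_eq {p q : ℂ[X]}
    (h : ∀ w : ℂ, w ≠ 0 → w ^ 2 ≠ 1 → p.eval (latX w) = q.eval (latX w)) : p = q := by
  refine eq_of_infinite_eval_eq p q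
    (Set.infinite_of_injective_forall_mem latX_natCast_add_two_injective fun k => h _ ?_ ?_)
  · norm_cast
  · norm_cast
    simp

theorem gam_zero (r : ℂ) : gam r 0 = 0 := by simp [gam]

theorem al_zero (r : ℂ) : al r 0 = 1 := by norm_num [al]

theorem al_ofReal_ne_zero {s : ℝ} (hs : 0 < s) (n : ℕ) : al s n ≠ 0 := by
  have : (s ^ n + s⁻¹ ^ n) / 2 ≠ 0 := by positivity
  rw [al]
  exact_mod_cast this

theorem gam_mul_al_sub_gam_mul_al {r : ℂ} (hr : r - r⁻¹ ≠ 0) (n : ℕ) :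
    gam r (n + 1) * al r (n + 1) - gam r n * al r (n + 2) = (r + r⁻¹) / 2 := by
  have hpow : r ^ n * r⁻¹ ^ n = 1 := by
    rw [← mul_pow, mul_inv_cancel₀ (ne_zero_of_sub_inv_ne_zero hr), one_pow]
  rw [gam, gam, al, al, div_mul_div_comm, div_mul_div_comm, div_sub_div_same,
    div_eq_div_iff (mul_ne_zero hr two_ne_zero) two_ne_zero]
  linear_combination 2 * (r ^ 2 - r⁻¹ ^ 2) * hpow

/-- `s` is `S_q p`, tested at the lattice points `w ≠ 0, ±1` (at `w = ±1` the divided difference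
has a zero denominator). -/
def IsAvgPoly (r : ℂ) (p s : ℂ[X]) : Prop :=
  ∀ w : ℂ, w ≠ 0 → w ^ 2 ≠ 1 → Sq r (pl p) w = s.eval (latX w)

def IsDiffPoly (r : ℂ) (p d : ℂ[X]) : Prop :=
  ∀ w : ℂ, w ≠ 0 → w ^ 2 ≠ 1 → Dq r (pl p) w = d.eval (latX w)

section Representation

variable {r : ℂ} {p q s t d e : ℂ[X]}

theorem IsAvgPoly.unique (hs : IsAvgPoly r p s) (ht : IsAvgPoly r p t) : s = t :=
  eq_of_eval_latX_eq fun w hw hw2 => (hs w hw hw2).symm.trans (ht w hw hw2)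

theorem IsDiffPoly.unique (hd : IsDiffPoly r p d) (he : IsDiffPoly r p e) : d = e :=
  eq_of_eval_latX_eq fun w hw hw2 => (hd w hw hw2).symm.trans (he w hw hw2)

theorem IsAvgPoly.C_mul_add (hs : IsAvgPoly r p s) (ht : IsAvgPoly r q t) (x : ℂ) :
    IsAvgPoly r (C x * p + q) (C x * s + t) := fun w hw hw2 => by
  have hlin : Sq r (pl (C x * p + q)) w = x * Sq r (pl p) w + Sq r (pl q) w := by
    simp only [Sq, pl, eval_add, eval_mul, eval_C]
    ring
  rw [hlin, hs w hw hw2, ht w hw hw2]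
  simp

theorem IsDiffPoly.C_mul_add (hd : IsDiffPoly r p d) (he : IsDiffPoly r q e) (x : ℂ) :
    IsDiffPoly r (C x * p + q) (C x * d + e) := fun w hw hw2 => by
  have hlin : Dq r (pl (C x * p + q)) w = x * Dq r (pl p) w + Dq r (pl q) w := by
    simp only [Dq, pl, eval_add, eval_mul, eval_C]
    ring
  rw [hlin, hd w hw hw2, he w hw hw2]
  simp

theorem isDiffPoly_C (r x : ℂ) : IsDiffPoly r (C x) 0 := fun w _ _ => by
  simp [Dq, pl]

theorem isAvgPoly_T (hr0 : r ≠ 0) (n : ℕ) : IsAvgPoly r (T ℂ n) (C (al r n) * T ℂ n) :=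
  fun w hw _ => by
    simp only [Sq, pl, eval_mul, eval_C, al, T_eval_latX hw,
      T_eval_latX (mul_ne_zero hr0 hw), T_eval_latX (div_ne_zero hw hr0)]
    simp only [mul_inv, mul_pow, div_eq_mul_inv, inv_pow, inv_inv]
    ring

theorem isDiffPoly_T (hr : r - r⁻¹ ≠ 0) (n : ℕ) :
    IsDiffPoly r (T ℂ (n + 1 : ℕ)) (C (gam r (n + 1)) * U ℂ n) := fun w hw hw2 => by
  have hr0 := ne_zero_of_sub_inv_ne_zero hr
  have hgam : gam r (n + 1) * (r - r⁻¹) = r ^ (n + 1) - r⁻¹ ^ (n + 1) :=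
    div_mul_cancel₀ _ hr
  have hden : latX (r * w) - latX (w / r) = (r - r⁻¹) * (w - w⁻¹) / 2 := by
    simp only [latX, mul_inv, div_eq_mul_inv, inv_inv]
    ring
  simp only [Dq, pl, eval_mul, eval_C, hden]
  rw [div_eq_iff (by simp [hr, sub_inv_ne_zero hw hw2]), T_eval_latX (mul_ne_zero hr0 hw),
    T_eval_latX (div_ne_zero hw hr0)]
  simp only [mul_inv, mul_pow, div_eq_mul_inv, inv_pow, inv_inv]
  linear_combination (-1 / 2) * ((w - w⁻¹) * (U ℂ n).eval (latX w) * hgam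
    + (r ^ (n + 1) - r⁻¹ ^ (n + 1)) * U_eval_latX hw n)

theorem exists_isAvgPoly (hr0 : r ≠ 0) :
    ∀ (n : ℕ) (p : ℂ[X]), p.degree < n → ∃ s, IsAvgPoly r p s ∧ s.degree < n
  | 0, p, hp => by
    rw [Nat.cast_zero, Nat.WithBot.lt_zero_iff, degree_eq_bot] at hp
    exact ⟨0, fun w _ _ => by simp [hp, Sq, pl], by simp⟩
  | n + 1, p, hp => by
    obtain ⟨x, q, rfl, hq⟩ := exists_eq_C_mul_T_add (by exact_mod_cast hp)
    obtain ⟨s, hs, hsdeg⟩ := exists_isAvgPoly hr0 n q hq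
    refine ⟨_, (isAvgPoly_T hr0 n).C_mul_add hs x, degree_C_mul_add_lt ?_ ?_ x⟩
    · rw [← smul_eq_C_mul]
      exact (degree_smul_le _ _).trans_lt
        (by simpa using (Nat.cast_lt (α := WithBot ℕ)).2 n.lt_succ_self)
    · exact hsdeg.trans (by exact_mod_cast n.lt_succ_self)

theorem exists_isDiffPoly (hr : r - r⁻¹ ≠ 0) :
    ∀ (n : ℕ) (p : ℂ[X]), p.degree < n + 1 → ∃ d, IsDiffPoly r p d ∧ d.degree < n
  | 0, p, hp => by
    rw [Nat.cast_zero, zero_add, Nat.WithBot.lt_one_iff_le_zero] at hp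
    rw [eq_C_of_degree_le_zero hp]
    exact ⟨0, isDiffPoly_C r _, by simp⟩
  | n + 1, p, hp => by
    obtain ⟨x, q, rfl, hq⟩ := exists_eq_C_mul_T_add (n := n + 1) (by exact_mod_cast hp)
    obtain ⟨d, hd, hddeg⟩ := exists_isDiffPoly hr n q (by exact_mod_cast hq)
    refine ⟨_, (isDiffPoly_T hr n).C_mul_add hd x, degree_C_mul_add_lt ?_ ?_ x⟩
    · rw [← smul_eq_C_mul]
      exact (degree_smul_le _ _).trans_lt
        (by simpa using (Nat.cast_lt (α := WithBot ℕ)).2 n.lt_succ_self)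
    · exact hddeg.trans (by exact_mod_cast n.lt_succ_self)

theorem IsAvgPoly.coeff_of_degree_lt_add_one (hr0 : r ≠ 0) (hs : IsAvgPoly r p s) {n : ℕ}
    (hp : p.degree < n + 1) : s.coeff n = al r n * p.coeff n := by
  obtain ⟨x, q, rfl, hq⟩ := exists_eq_C_mul_T_add hp
  obtain ⟨t, ht, htdeg⟩ := exists_isAvgPoly hr0 n q hq
  rw [hs.unique ((isAvgPoly_T hr0 n).C_mul_add ht x)]
  simp only [coeff_add, coeff_C_mul, coeff_eq_zero_of_degree_lt hq,
    coeff_eq_zero_of_degree_lt htdeg]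
  ring

theorem IsAvgPoly.coeff_of_degree_lt_add_two (hr0 : r ≠ 0) (hs : IsAvgPoly r p s) {n : ℕ}
    (hp : p.degree < n + 2) : s.coeff n = al r n * p.coeff n := by
  obtain ⟨x, q, rfl, hq⟩ := exists_eq_C_mul_T_add (n := n + 1) (by exact_mod_cast hp)
  obtain ⟨t, ht, -⟩ := exists_isAvgPoly hr0 (n + 1) q hq
  rw [hs.unique ((isAvgPoly_T hr0 (n + 1)).C_mul_add ht x)]
  simp only [coeff_add, coeff_C_mul, Chebyshev.coeff_T_succ_self,
    ht.coeff_of_degree_lt_add_one hr0 (by exact_mod_cast hq)]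
  ring

theorem IsDiffPoly.coeff_of_degree_lt_add_two (hr : r - r⁻¹ ≠ 0) (hd : IsDiffPoly r p d)
    {n : ℕ} (hp : p.degree < n + 2) : d.coeff n = gam r (n + 1) * p.coeff (n + 1) := by
  obtain ⟨x, q, rfl, hq⟩ := exists_eq_C_mul_T_add (n := n + 1) (by exact_mod_cast hp)
  obtain ⟨e, he, hedeg⟩ := exists_isDiffPoly hr n q (by exact_mod_cast hq)
  rw [hd.unique ((isDiffPoly_T hr n).C_mul_add he x)]
  simp only [coeff_add, coeff_C_mul, Chebyshev.coeff_U_natCast_self,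
    Chebyshev.coeff_T_natCast_self, coeff_eq_zero_of_degree_lt hedeg,
    coeff_eq_zero_of_degree_lt hq, Nat.add_sub_cancel]
  ring

theorem IsDiffPoly.coeff_of_degree_lt_add_three (hr : r - r⁻¹ ≠ 0) (hd : IsDiffPoly r p d)
    {n : ℕ} (hp : p.degree < n + 3) : d.coeff n = gam r (n + 1) * p.coeff (n + 1) := by
  obtain ⟨x, q, rfl, hq⟩ := exists_eq_C_mul_T_add (n := n + 2) (by exact_mod_cast hp)
  obtain ⟨e, he, -⟩ := exists_isDiffPoly hr (n + 1) q (by exact_mod_cast hq)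
  rw [hd.unique ((isDiffPoly_T hr (n + 1)).C_mul_add he x)]
  simp only [coeff_add, coeff_C_mul, Chebyshev.coeff_U_succ_self, Chebyshev.coeff_T_succ_self,
    he.coeff_of_degree_lt_add_two hr (by exact_mod_cast hq)]
  ring

/-- Stated for `X * d` so that it also holds at `n = 0`. -/
theorem IsDiffPoly.coeff_X_mul (hr : r - r⁻¹ ≠ 0) (hd : IsDiffPoly r p d) {n : ℕ}
    (hp : p.degree < n + 2) : (X * d).coeff n = gam r n * p.coeff n := by
  cases n with
  | zero => simp [gam_zero]
  | succ n =>
    rw [Polynomial.coeff_X_mul]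
    exact hd.coeff_of_degree_lt_add_three hr (by exact_mod_cast hp)

end Representation

/-- The truncated `n - 1` is harmless at `n = 0` because `gam r 0 = 0`. -/
theorem coeff_eq_of_structure_relation {r a b c A Bb Cc : ℂ} (hr : r - r⁻¹ ≠ 0)
    {p₀ p₁ p₂ : ℂ[X]} {n : ℕ} (h₀ : p₀.degree < n + 1) (h₁ : p₁.degree < n + 2)
    (h₂ : p₂.degree < n)
    (heq : ∀ w : ℂ, w ≠ 0 → w ^ 2 ≠ 1 →
      (a * latX w ^ 2 + b * latX w + c) * Dq r (pl p₀) w =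
        A * Sq r (pl p₁) w + Bb * Sq r (pl p₀) w + Cc * Sq r (pl p₂) w) :
    a * gam r (n - 1) * p₀.coeff (n - 1) + b * gam r n * p₀.coeff n
      = al r n * (A * p₁.coeff n + Bb * p₀.coeff n) := by
  have hr0 := ne_zero_of_sub_inv_ne_zero hr
  have h₀' : p₀.degree < n + 2 := h₀.trans (by exact_mod_cast (by omega : n + 1 < n + 2))
  obtain ⟨s₀, hs₀, -⟩ := exists_isAvgPoly hr0 (n + 2) p₀ (by exact_mod_cast h₀')
  obtain ⟨s₁, hs₁, -⟩ := exists_isAvgPoly hr0 (n + 2) p₁ (by exact_mod_cast h₁)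
  obtain ⟨s₂, hs₂, hs₂deg⟩ := exists_isAvgPoly hr0 n p₂ h₂
  obtain ⟨d, hd, hddeg⟩ := exists_isDiffPoly hr n p₀ h₀
  have hpoly : C a * (X * (X * d)) + C b * (X * d) + C c * d
      = C A * s₁ + C Bb * s₀ + C Cc * s₂ :=
    eq_of_eval_latX_eq fun w hw hw2 => by
      simp only [eval_add, eval_mul, eval_C, eval_X, ← hs₀ w hw hw2, ← hs₁ w hw hw2,
        ← hs₂ w hw hw2, ← hd w hw hw2]
      linear_combination heq w hw hw2
  have key := congrArg (coeff · n) hpoly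
  simp only [coeff_add, coeff_C_mul, coeff_eq_zero_of_degree_lt hddeg,
    coeff_eq_zero_of_degree_lt hs₂deg, hd.coeff_X_mul hr h₀',
    hs₁.coeff_of_degree_lt_add_two hr0 h₁, hs₀.coeff_of_degree_lt_add_two hr0 h₀'] at key
  cases n with
  | zero => simpa [gam_zero, al_zero] using key
  | succ m =>
    rw [Polynomial.coeff_X_mul, hd.coeff_X_mul hr (by exact_mod_cast h₀)] at key
    rw [Nat.add_sub_cancel]
    linear_combination key

theorem coeff_succ_self_eq_neg_sum {R : Type*} [CommRing R] {P : ℕ → R[X]} {B Cn : ℕ → R}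
    (hmonic : ∀ n, (P n).Monic) (hdeg : ∀ n, (P n).natDegree = n) (h1 : P 1 = X - C (B 0))
    (hrec : ∀ n, P (n + 2) = (X - C (B (n + 1))) * P (n + 1) - C (Cn (n + 1)) * P n) (n : ℕ) :
    (P (n + 1)).coeff n = -∑ j ∈ range (n + 1), B j := by
  induction n with
  | zero => simp [h1]
  | succ n ih =>
    have hlead : (P (n + 1)).coeff (n + 1) = 1 := by
      simpa [hdeg] using (hmonic (n + 1)).coeff_natDegree
    have hzero : (P n).coeff (n + 1) = 0 := coeff_eq_zero_of_natDegree_lt (by rw [hdeg]; omega)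
    rw [hrec, sum_range_succ]
    simp only [coeff_sub, sub_mul, coeff_X_mul, coeff_C_mul, hlead, hzero, ih]
    ring

theorem coeff_comparison_bn_general (q : ℝ) (hq0 : 0 < q) (hq1 : q < 1)
    (r : ℂ) (hr : r = (Real.sqrt q : ℂ))
    (α : ℂ) (hα : α = (r + r⁻¹) / 2)
    (a b c : ℂ) (A Bb Cc B Cn : ℕ → ℂ)
    (P : ℕ → Polynomial ℂ) (Pprev : ℕ → Polynomial ℂ)
    (hmonic : ∀ n, (P n).Monic) (hdeg : ∀ n, (P n).natDegree = n)
    (hP0 : P 0 = 1)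
    (hPprev0 : Pprev 0 = 0) (hPprevS : ∀ n, Pprev (n + 1) = P n)
    (hrec : ∀ n, P (n + 1) =
      (Polynomial.X - Polynomial.C (B n)) * P n - Polynomial.C (Cn n) * Pprev n)
    (heq : ∀ n, ∀ w : ℂ, w ≠ 0 → w ^ 2 ≠ 1 →
      (a * latX w ^ 2 + b * latX w + c) * Dq r (pl (P n)) w =
        A n * Sq r (pl (P (n + 1))) w + Bb n * Sq r (pl (P n)) w
          + Cc n * Sq r (pl (Pprev n)) w)
    (hA : ∀ n, A n = a * gam r n / al r (n + 1)) :
    ∀ n : ℕ, al r n * al r (n + 1) * Bb n =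
      gam r n * (a * al r n * B n + b * al r (n + 1))
        + a * α * ∑ j ∈ Finset.range n, B j := by
  have hs : 0 < √q := Real.sqrt_pos.2 hq0
  have hr1 : r - r⁻¹ ≠ 0 := by
    refine sub_inv_ne_zero (by rw [hr]; exact_mod_cast hs.ne') ?_
    rw [hr, ← Complex.ofReal_pow, Real.sq_sqrt hq0.le]
    exact_mod_cast hq1.ne
  have hdegP (n k : ℕ) (h : n < k) : (P n).degree < k := by
    rw [degree_eq_natDegree (hmonic n).ne_zero, hdeg]
    exact_mod_cast h
  have hdegPprev : ∀ n, (Pprev n).degree < n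
    | 0 => by simp [hPprev0]
    | n + 1 => hPprevS n ▸ hdegP n (n + 1) n.lt_succ_self
  have hlead (n : ℕ) : (P n).coeff n = 1 := by simpa [hdeg] using (hmonic n).coeff_natDegree
  have hf := coeff_succ_self_eq_neg_sum hmonic hdeg (by simpa [hP0, hPprev0] using hrec 0)
    fun n => by rw [hrec, hPprevS]
  intro n
  have key := coeff_eq_of_structure_relation hr1 (hdegP n (n + 1) n.lt_succ_self)
    (hdegP (n + 1) (n + 2) (by omega)) (hdegPprev n) (heq n)
  cases n with
  | zero =>
    have hBb : Bb 0 = 0 := by simpa [gam_zero, al_zero, hA, hlead] using key.symm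
    simp [hBb, gam_zero]
  | succ m =>
    rw [Nat.add_sub_cancel, hf, hf, hlead, sum_range_succ _ (m + 1), hA] at key
    rw [show m + 1 + 1 = m + 2 from rfl] at key ⊢
    have hal : al r (m + 2) ≠ 0 := hr ▸ al_ofReal_ne_zero hs _
    rw [hα, ← gam_mul_al_sub_gam_mul_al hr1 m]
    field_simp at key
    linear_combination -key

theorem coeff_comparison_bn (q : ℝ) (hq0 : 0 < q) (hq1 : q < 1)
    (r : ℂ) (hr : r = (Real.sqrt q : ℂ))
    (α : ℂ) (hα : α = (r + r⁻¹) / 2)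
    (a b c : ℂ) (A Bb Cc B Cn : ℕ → ℂ)
    (P : ℕ → Polynomial ℂ) (Pprev : ℕ → Polynomial ℂ)
    (hmonic : ∀ n, (P n).Monic) (hdeg : ∀ n, (P n).natDegree = n)
    (hP0 : P 0 = 1)
    (hPprev0 : Pprev 0 = 0) (hPprevS : ∀ n, Pprev (n + 1) = P n)
    (hCn : ∀ n, Cn n ≠ 0)
    (hrec : ∀ n, P (n + 1) =
      (Polynomial.X - Polynomial.C (B n)) * P n - Polynomial.C (Cn n) * Pprev n)
    (heq : ∀ n, ∀ w : ℂ, w ≠ 0 → w ^ 2 ≠ 1 →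
      (a * latX w ^ 2 + b * latX w + c) * Dq r (pl (P n)) w =
        A n * Sq r (pl (P (n + 1))) w + Bb n * Sq r (pl (P n)) w
          + Cc n * Sq r (pl (Pprev n)) w)
    (hA : ∀ n, A n = a * gam r n / al r (n + 1)) :
    ∀ n : ℕ, al r n * al r (n + 1) * Bb n =
      gam r n * (a * al r n * B n + b * al r (n + 1))
        + a * α * ∑ j ∈ Finset.range n, B j :=
  coeff_comparison_bn_general q hq0 hq1 r hr α hα a b c A Bb Cc B Cn P Pprev hmonic hdeg hP0 hPprev0
    hPprevS hrec heq hA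
end

section
/- If a monic polynomial sequence (P_n) with deg P_n = n satisfies (z−r)·D_q P_n(z) = b_n S_q P_n(z) + c_n S_q P_{n−1}(z) for all n, then comparing leading coefficients gives b_n = γ_n/α_n, and comparing the next coefficient gives c_n = −r γ_n/α_{n−1} + (1/(α_n α_{n−1})) ∑_{j=0}^{n−1} B_j, where P_n(z)=z^n − (∑_{j=0}^{n−1}B_j) z^{n−1} + …. -/
open Polynomial Finset

noncomputable section Helpers

/-- dilation: (dil a p).eval w = p.eval (a*w) -/
def dil (a : ℂ) (p : ℂ[X]) : ℂ[X] :=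
  ∑ k ∈ Finset.range (p.natDegree + 1), C (p.coeff k * a ^ k) * X ^ k

lemma dil_coeff (a : ℂ) (p : ℂ[X]) (k : ℕ) :
    (dil a p).coeff k = p.coeff k * a ^ k := by
  unfold dil
  rw [finset_sum_coeff]
  simp only [coeff_C_mul, coeff_X_pow, mul_ite, mul_one, mul_zero]
  rw [Finset.sum_ite_eq (Finset.range (p.natDegree + 1)) k fun j => p.coeff j * a ^ j]
  by_cases h : k ∈ Finset.range (p.natDegree + 1)
  · simp [h]
  · simp only [h, if_false]
    rw [Finset.mem_range, not_lt] at h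
    rw [p.coeff_eq_zero_of_natDegree_lt (by omega), zero_mul]

lemma dil_eval (a : ℂ) (p : ℂ[X]) (w : ℂ) :
    (dil a p).eval w = p.eval (a * w) := by
  unfold dil
  rw [eval_finset_sum, p.eval_eq_sum_range]
  refine Finset.sum_congr rfl fun k _ => ?_
  simp [mul_pow]; ring

lemma dil_natDegree_le (a : ℂ) (p : ℂ[X]) : (dil a p).natDegree ≤ p.natDegree := by
  unfold dil
  refine Polynomial.natDegree_sum_le_of_forall_le _ _ fun k hk => ?_
  refine (Polynomial.natDegree_C_mul_le _ _).trans ?_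
  simp only [natDegree_X_pow]
  exact Nat.lt_succ_iff.mp (Finset.mem_range.mp hk)

lemma pow_sq_add_one_coeff_odd (k j : ℕ) :
    (((X : ℂ[X]) ^ 2 + 1) ^ k).coeff (2 * j + 1) = 0 := by
  rw [add_pow]
  rw [finset_sum_coeff]
  refine Finset.sum_eq_zero fun i _ => ?_
  simp only [one_pow, mul_one, ← pow_mul]
  rw [coeff_mul_natCast, coeff_X_pow]
  have : ¬ (2 * j + 1 = 2 * i) := by omega
  simp [this]

end Helpers

noncomputable section H2
def lift2 (p : ℂ[X]) : ℂ[X] :=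
  ∑ k ∈ Finset.range (p.natDegree + 1),
    C (p.coeff k * 2 ^ (p.natDegree - k)) * (((X : ℂ[X]) ^ 2 + 1) ^ k * X ^ (p.natDegree - k))

lemma sq_add_one_monic_pow (k : ℕ) : (((X : ℂ[X]) ^ 2 + 1) ^ k).Monic := by
  have h1 : ((X : ℂ[X]) ^ 2 + 1).Monic := by
    simpa using Polynomial.monic_X_pow_add_C (a := (1:ℂ)) (n := 2) (by norm_num)
  exact h1.pow k

lemma sq_add_one_pow_natDegree (k : ℕ) : (((X : ℂ[X]) ^ 2 + 1) ^ k).natDegree = 2 * k := by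
  rw [Polynomial.natDegree_pow]
  have : ((X : ℂ[X]) ^ 2 + 1).natDegree = 2 := by
    compute_degree!
  rw [this]; ring

lemma lift2_term_natDegree_le (k m : ℕ) (c : ℂ) :
    (C c * (((X : ℂ[X]) ^ 2 + 1) ^ k * X ^ m)).natDegree ≤ 2 * k + m := by
  refine (Polynomial.natDegree_C_mul_le _ _).trans ?_
  refine (Polynomial.natDegree_mul_le).trans ?_
  rw [sq_add_one_pow_natDegree, natDegree_X_pow]

lemma lift2_natDegree_le (p : ℂ[X]) : (lift2 p).natDegree ≤ 2 * p.natDegree := by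
  unfold lift2
  refine Polynomial.natDegree_sum_le_of_forall_le _ _ fun k hk => ?_
  have hk' := Nat.lt_succ_iff.mp (Finset.mem_range.mp hk)
  refine (lift2_term_natDegree_le _ _ _).trans ?_
  omega

lemma lift2_eval (p : ℂ[X]) (w : ℂ) (hw : w ≠ 0) :
    (lift2 p).eval w = p.eval (latX w) * (2*w) ^ p.natDegree := by
  unfold lift2
  rw [eval_finset_sum, p.eval_eq_sum_range, Finset.sum_mul]
  refine Finset.sum_congr rfl fun k hk => ?_
  have hk' := Nat.lt_succ_iff.mp (Finset.mem_range.mp hk)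
  simp only [eval_mul, eval_C, eval_pow, eval_add, eval_X, eval_one, latX]
  have h2 : (2 : ℂ) ≠ 0 := two_ne_zero
  rw [show p.natDegree = (p.natDegree - k) + k by omega, pow_add, mul_pow, mul_pow]
  field_simp
  simp only [Nat.add_sub_cancel]
  have e : w^k * 2^k * (w^2*w⁻¹*(1/2)+w⁻¹*(1/2))^k = (1+w^2)^k := by
    rw [← mul_pow, ← mul_pow]; congr 1; field_simp; ring
  linear_combination (-(p.coeff k * w^(p.natDegree-k)*2^(p.natDegree-k))) * e

lemma lift2_coeff_top (p : ℂ[X]) {n : ℕ} (h : p.natDegree = n) :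
    (lift2 p).coeff (2 * n) = p.coeff n := by
  unfold lift2
  rw [finset_sum_coeff, h]
  rw [Finset.sum_eq_single n]
  · rw [show n - n = 0 by omega]
    simp only [pow_zero, mul_one, coeff_C_mul]
    have hm := sq_add_one_monic_pow (k := n)
    have hd := sq_add_one_pow_natDegree (k := n)
    have : (((X : ℂ[X]) ^ 2 + 1) ^ n).coeff (2 * n) = 1 := by
      have := hm.coeff_natDegree
      rwa [hd] at this
    rw [this, mul_one]
  · intro k hk hkn
    have hk' := Nat.lt_succ_iff.mp (Finset.mem_range.mp hk)
    refine Polynomial.coeff_eq_zero_of_natDegree_lt ?_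
    refine lt_of_le_of_lt (lift2_term_natDegree_le _ _ _) ?_
    omega
  · intro h'; exact absurd (Finset.mem_range.mpr (by omega)) h'

lemma lift2_coeff_next (p : ℂ[X]) {n : ℕ} (h : p.natDegree = n + 1) :
    (lift2 p).coeff (2 * n + 1) = 2 * p.coeff n := by
  unfold lift2
  rw [finset_sum_coeff, h]
  rw [Finset.sum_eq_single n]
  · rw [show n + 1 - n = 1 by omega]
    simp only [pow_one, coeff_C_mul]
    rw [Polynomial.coeff_mul_X]
    have hm := sq_add_one_monic_pow (k := n)
    have hd := sq_add_one_pow_natDegree (k := n)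
    have : (((X : ℂ[X]) ^ 2 + 1) ^ n).coeff (2 * n) = 1 := by
      have := hm.coeff_natDegree
      rwa [hd] at this
    rw [this, mul_one]
    ring
  · intro k hk hkn
    have hk' := Nat.lt_succ_iff.mp (Finset.mem_range.mp hk)
    rcases Nat.lt_or_ge k n with hlt | hge
    · refine Polynomial.coeff_eq_zero_of_natDegree_lt ?_
      refine lt_of_le_of_lt (lift2_term_natDegree_le _ _ _) ?_
      omega
    · have hk1 : k = n + 1 := by omega
      subst hk1
      rw [show n + 1 - (n + 1) = 0 by omega]
      simp only [pow_zero, mul_one, coeff_C_mul]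
      rw [pow_sq_add_one_coeff_odd]
      ring
  · intro h'; exact absurd (Finset.mem_range.mpr (by omega)) h'

/-- codilation: eval w = a^N * p.eval (w/a), inverse-free coefficients. -/
def codil (a : ℂ) (N : ℕ) (p : ℂ[X]) : ℂ[X] :=
  ∑ k ∈ Finset.range (N + 1), C (p.coeff k * a ^ (N - k)) * X ^ k

lemma codil_coeff (a : ℂ) (N : ℕ) (p : ℂ[X]) (k : ℕ) (hk : k ≤ N) :
    (codil a N p).coeff k = p.coeff k * a ^ (N - k) := by
  unfold codil
  rw [finset_sum_coeff]
  simp only [coeff_C_mul, coeff_X_pow, mul_ite, mul_one, mul_zero]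
  rw [Finset.sum_ite_eq (Finset.range (N + 1)) k fun j => p.coeff j * a ^ (N - j)]
  simp [Finset.mem_range.mpr (by omega : k < N + 1)]

lemma codil_coeff_gt (a : ℂ) (N : ℕ) (p : ℂ[X]) (k : ℕ) (hk : N < k) :
    (codil a N p).coeff k = 0 := by
  unfold codil
  rw [finset_sum_coeff]
  refine Finset.sum_eq_zero fun j hj => ?_
  have hj' := Nat.lt_succ_iff.mp (Finset.mem_range.mp hj)
  simp only [coeff_C_mul, coeff_X_pow]
  rw [if_neg (by omega)]
  ring

lemma codil_eval (a : ℂ) (N : ℕ) (p : ℂ[X]) (w : ℂ) (ha : a ≠ 0)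
    (hd : p.natDegree ≤ N) :
    (codil a N p).eval w = a ^ N * p.eval (w / a) := by
  unfold codil
  rw [eval_finset_sum, p.eval_eq_sum_range' (Nat.lt_succ_of_le hd), Finset.mul_sum]
  refine Finset.sum_congr rfl fun k hk => ?_
  have hk' := Nat.lt_succ_iff.mp (Finset.mem_range.mp hk)
  simp only [eval_mul, eval_C, eval_pow, eval_X, div_pow]
  rw [show N = (N - k) + k by omega, pow_add]
  field_simp
  rw [Nat.add_sub_cancel]
  ring

end H2

set_option maxHeartbeats 2000000 in
theorem coeff_comparison_linear_case (q : ℝ) (hq0 : 0 < q) (hq1 : q < 1)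
    (r : ℂ) (hr : r = (Real.sqrt q : ℂ))
    (r0 : ℂ) (Bb Cc B Cn : ℕ → ℂ)
    (P : ℕ → Polynomial ℂ) (Pprev : ℕ → Polynomial ℂ)
    (hmonic : ∀ n, (P n).Monic) (hdeg : ∀ n, (P n).natDegree = n)
    (hP0 : P 0 = 1)
    (hPprev0 : Pprev 0 = 0) (hPprevS : ∀ n, Pprev (n + 1) = P n)
    (hCn : ∀ n, Cn n ≠ 0)
    (hrec : ∀ n, P (n + 1) =
      (Polynomial.X - Polynomial.C (B n)) * P n - Polynomial.C (Cn n) * Pprev n)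
    (heq : ∀ n, ∀ w : ℂ, w ≠ 0 → w ^ 2 ≠ 1 →
      (latX w - r0) * Dq r (pl (P n)) w =
        Bb n * Sq r (pl (P n)) w + Cc n * Sq r (pl (Pprev n)) w) :
    (∀ n : ℕ, Bb n = gam r n / al r n) ∧
    (∀ n : ℕ, 1 ≤ n →
      Cc n = -r0 * gam r n / al r (n - 1)
        + (1 / (al r n * al r (n - 1))) * ∑ j ∈ Finset.range n, B j) := by
  -- basic facts about r
  have hs0 : (0:ℝ) < Real.sqrt q := Real.sqrt_pos.mpr hq0
  have hs1 : Real.sqrt q < 1 := by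
    nlinarith [Real.sq_sqrt hq0.le, Real.sqrt_nonneg q]
  have hrne : r ≠ 0 := by
    rw [hr]; exact_mod_cast hs0.ne'
  have hr2 : r ^ 2 ≠ 1 := by
    rw [hr]
    intro h
    have : (Real.sqrt q) ^ 2 = 1 := by exact_mod_cast h
    nlinarith
  have hr2' : r * r - 1 ≠ 0 := by
    intro h; exact hr2 (by linear_combination h)
  have hrr : r - r⁻¹ ≠ 0 := by
    intro h
    apply hr2
    have := sub_eq_zero.mp h
    field_simp [hrne] at this
    rw [← this]
  have hal : ∀ k : ℕ, r ^ k + r⁻¹ ^ k ≠ 0 := by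
    intro k
    rw [hr]
    have h1 : (0:ℝ) < Real.sqrt q ^ k := pow_pos hs0 k
    have h2 : (0:ℝ) < (Real.sqrt q)⁻¹ ^ k := pow_pos (by positivity) k
    intro h
    have : ((Real.sqrt q ^ k + (Real.sqrt q)⁻¹ ^ k : ℝ) : ℂ) = 0 := by
      push_cast; convert h using 2
    have := Complex.ofReal_eq_zero.mp this
    nlinarith
  have halne : ∀ k : ℕ, al r k ≠ 0 := by
    intro k
    unfold al
    exact div_ne_zero (hal k) two_ne_zero
  -- subleading coefficient of P
  have hβ : ∀ m : ℕ, (P (m+1)).coeff m = -∑ j ∈ Finset.range (m+1), B j := by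
    intro m
    induction m with
    | zero =>
      rw [hrec 0, hP0, hPprev0]
      simp
    | succ k ih =>
      rw [hrec (k+1), hPprevS k]
      rw [Polynomial.coeff_sub, sub_mul, Polynomial.coeff_sub,
        Polynomial.coeff_X_mul, Polynomial.coeff_C_mul, Polynomial.coeff_C_mul]
      have h1 : (P (k+1)).coeff (k+1) = 1 := by
        have := (hmonic (k+1)).coeff_natDegree
        rwa [hdeg] at this
      have h2 : (P k).coeff (k+1) = 0 :=
        Polynomial.coeff_eq_zero_of_natDegree_lt (by rw [hdeg]; omega)
      rw [h1, h2, Finset.sum_range_succ, ih]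
      ring
  -- main claim for n = m+1
  have main : ∀ m : ℕ,
      Bb (m+1) = gam r (m+1) / al r (m+1) ∧
      Cc (m+1) = -r0 * gam r (m+1) / al r m
        + (1/(al r (m+1) * al r m)) * ∑ j ∈ Finset.range (m+1), B j := by
    intro m
    set Q := lift2 (P (m+1)) with hQdef
    set R := lift2 (P m) with hRdef
    have hQd : Q.natDegree ≤ 2*m+2 := by
      have := lift2_natDegree_le (P (m+1))
      rwa [hdeg, show 2*(m+1) = 2*m+2 by ring] at this
    have hRd : R.natDegree ≤ 2*m := by
      have := lift2_natDegree_le (P m)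
      rwa [hdeg] at this
    set S1 := dil r Q - codil r (2*m+2) Q with hS1
    set S2 := dil r Q + codil r (2*m+2) Q with hS2
    set T := C (2*r) * (dil r R + codil r (2*m) R) with hT
    set G := C (2*r) * (X^2 * S1) + C (2*r) * S1 - C (4*r0*r) * (X^1 * S1)
       - C ((r*r-1) * Bb (m+1)) * (X^2 * S2) + C ((r*r-1) * Bb (m+1)) * S2
       - C ((r*r-1) * Cc (m+1)) * (X^3 * T) + C ((r*r-1) * Cc (m+1)) * (X^1 * T) with hG
    have hGeval : ∀ w : ℂ, w ≠ 0 → w^2 ≠ 1 → G.eval w = 0 := by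
      intro w hw hw2
      have hrw : r * w ≠ 0 := mul_ne_zero hrne hw
      have hwr : w / r ≠ 0 := div_ne_zero hw hrne
      have hwne : w - w⁻¹ ≠ 0 := by
        intro h
        apply hw2
        have := sub_eq_zero.mp h
        field_simp [hw] at this
        rw [← this]
      have hw2' : w * w - 1 ≠ 0 := by
        intro h; exact hw2 (by linear_combination h)
      have key := heq (m+1) w hw hw2
      rw [hPprevS] at key
      simp only [Dq, Sq, pl] at key
      have hden : latX (r*w) - latX (w/r) = (r - r⁻¹) * (w - w⁻¹)/2 := by
        simp only [latX]
        field_simp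
        ring
      have hE1 : (P (m+1)).eval (latX (r*w)) =
          (2^(m+1))⁻¹ * ((r^(m+1))⁻¹ * ((w^(m+1))⁻¹ * Q.eval (r*w))) := by
        have h := lift2_eval (P (m+1)) (r*w) hrw
        rw [hdeg] at h
        rw [h, mul_pow, mul_pow]
        field_simp
      have hE2 : (P (m+1)).eval (latX (w/r)) =
          (2^(m+1))⁻¹ * (r^(m+1) * ((w^(m+1))⁻¹ * Q.eval (w/r))) := by
        have h := lift2_eval (P (m+1)) (w/r) hwr
        rw [hdeg] at h
        rw [h, mul_pow, div_pow]
        field_simp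
      have hF1 : (P m).eval (latX (r*w)) =
          (2^m)⁻¹ * ((r^m)⁻¹ * ((w^m)⁻¹ * R.eval (r*w))) := by
        have h := lift2_eval (P m) (r*w) hrw
        rw [hdeg] at h
        rw [h, mul_pow, mul_pow]
        field_simp
      have hF2 : (P m).eval (latX (w/r)) =
          (2^m)⁻¹ * (r^m * ((w^m)⁻¹ * R.eval (w/r))) := by
        have h := lift2_eval (P m) (w/r) hwr
        rw [hdeg] at h
        rw [h, mul_pow, div_pow]
        field_simp
      rw [hden, hE1, hE2, hF1, hF2] at key
      simp only [latX] at key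
      have hrmne : (r:ℂ)^(m+1) ≠ 0 := pow_ne_zero _ hrne
      have hrm2 : (r:ℂ)^m ≠ 0 := pow_ne_zero _ hrne
      have hwm : (w:ℂ)^(m+1) ≠ 0 := pow_ne_zero _ hw
      have hwm2 : (w:ℂ)^m ≠ 0 := pow_ne_zero _ hw
      field_simp [hw2', hr2'] at key
      rw [hG, hS1, hS2, hT]
      simp only [eval_add, eval_sub, eval_mul, eval_pow, eval_C, eval_X, dil_eval,
        codil_eval r (2*m+2) Q w hrne hQd, codil_eval r (2*m) R w hrne hRd]
      refine mul_left_cancel₀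
        (a := 2^(5*m+5) * r^(2*m+1) * w^(5*m+4))
        (by apply_rules [mul_ne_zero, pow_ne_zero] <;> norm_num) ?_
      rw [mul_zero]
      rw [mul_comm w r] at key
      linear_combination (2^(4*m+5) * r^(m+1) * w^(4*m+4)) * key
    have hG0 : G = 0 := by
      apply Polynomial.eq_zero_of_infinite_isRoot
      have hfin : ({0, 1, -1} : Set ℂ).Finite := Set.toFinite _
      refine Set.Infinite.mono ?_ (hfin.infinite_compl)
      intro w hw
      simp only [Set.mem_compl_iff, Set.mem_insert_iff, Set.mem_singleton_iff, not_or] at hw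
      have hw2 : w ^ 2 ≠ 1 := by
        intro h
        have : (w - 1) * (w + 1) = 0 := by linear_combination h
        rcases mul_eq_zero.mp this with h' | h'
        · exact hw.2.1 (by linear_combination h')
        · exact hw.2.2 (by linear_combination h')
      exact hGeval w hw.1 hw2
    -- coefficient facts
    have hQtop : Q.coeff (2*m+2) = 1 := by
      have h := lift2_coeff_top (P (m+1)) (hdeg (m+1))
      have h1 : (P (m+1)).coeff (m+1) = 1 := by
        have := (hmonic (m+1)).coeff_natDegree
        rwa [hdeg] at this
      rw [h1] at h
      rw [show 2*m+2 = 2*(m+1) by ring]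
      exact h
    have hQnext : Q.coeff (2*m+1) = 2 * (P (m+1)).coeff m :=
      lift2_coeff_next (P (m+1)) (hdeg (m+1))
    have hQ3 : Q.coeff (2*m+3) = 0 :=
      Polynomial.coeff_eq_zero_of_natDegree_lt (by omega)
    have hQ4 : Q.coeff (2*m+4) = 0 :=
      Polynomial.coeff_eq_zero_of_natDegree_lt (by omega)
    have hRtop : R.coeff (2*m) = 1 := by
      have h := lift2_coeff_top (P m) (hdeg m)
      have h1 : (P m).coeff m = 1 := by
        have := (hmonic m).coeff_natDegree
        rwa [hdeg] at this
      rw [h1] at h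
      exact h
    have hR1 : R.coeff (2*m+1) = 0 :=
      Polynomial.coeff_eq_zero_of_natDegree_lt (by omega)
    have hR2 : R.coeff (2*m+2) = 0 :=
      Polynomial.coeff_eq_zero_of_natDegree_lt (by omega)
    have hR3 : R.coeff (2*m+3) = 0 :=
      Polynomial.coeff_eq_zero_of_natDegree_lt (by omega)
    have e1 : G.coeff (2*m+4) = 0 := by rw [hG0]; simp
    have e2 : G.coeff (2*m+3) = 0 := by rw [hG0]; simp
    rw [hG, hS1, hS2, hT] at e1 e2
    simp only [Polynomial.coeff_add, Polynomial.coeff_sub, Polynomial.coeff_C_mul,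
      Polynomial.coeff_X_pow_mul', dil_coeff] at e1 e2
    simp only [show (2 ≤ 2*m+4) = True by simp, show (1 ≤ 2*m+4) = True by simp,
      show (3 ≤ 2*m+4) = True by simp, show (2 ≤ 2*m+3) = True by simp,
      show (1 ≤ 2*m+3) = True by simp, show (3 ≤ 2*m+3) = True by simp,
      if_true] at e1 e2
    simp only [show 2*m+4-2 = 2*m+2 by omega, show 2*m+4-1 = 2*m+3 by omega,
      show 2*m+4-3 = 2*m+1 by omega, show 2*m+3-2 = 2*m+1 by omega,
      show 2*m+3-1 = 2*m+2 by omega, show 2*m+3-3 = 2*m by omega] at e1 e2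
    simp only [codil_coeff r (2*m+2) Q (2*m+2) (by omega), codil_coeff r (2*m+2) Q (2*m+1) (by omega),
      codil_coeff_gt r (2*m+2) Q (2*m+3) (by omega), codil_coeff_gt r (2*m+2) Q (2*m+4) (by omega),
      codil_coeff r (2*m) R (2*m) (by omega), codil_coeff_gt r (2*m) R (2*m+1) (by omega),
      codil_coeff_gt r (2*m) R (2*m+2) (by omega), codil_coeff_gt r (2*m) R (2*m+3) (by omega)] at e1 e2
    simp only [show 2*m+2-(2*m+2) = 0 by omega, show 2*m+2-(2*m+1) = 1 by omega,
      show 2*m-2*m = 0 by omega, pow_zero, pow_one] at e1 e2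
    simp only [hQtop, hQnext, hQ3, hQ4, hRtop, hR1, hR2, hR3, hβ m] at e1 e2
    have hone : r^(m+1) * r^(m+1) + 1 ≠ 0 := by
      intro h
      apply hal (m+1)
      have h2 : (r^(m+1) + r⁻¹^(m+1)) * r^(m+1) = r^(m+1) * r^(m+1) + 1 := by
        field_simp
        rw [one_div, inv_pow, mul_add, mul_inv_cancel₀ (pow_ne_zero _ hrne)]; ring
      exact (mul_eq_zero.mp (h2.trans h)).resolve_right (pow_ne_zero _ hrne)
    have honem : r^m * r^m + 1 ≠ 0 := by
      intro h
      apply hal m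
      have h2 : (r^m + r⁻¹^m) * r^m = r^m * r^m + 1 := by
        field_simp
        rw [one_div, inv_pow, mul_add, mul_inv_cancel₀ (pow_ne_zero _ hrne)]; ring
      exact (mul_eq_zero.mp (h2.trans h)).resolve_right (pow_ne_zero _ hrne)
    have hBb : Bb (m+1) = gam r (m+1) / al r (m+1) := by
      rw [gam, al]
      have hone' : (r^(m+1))^2+1 ≠ 0 := by rw [sq]; exact hone
      have honem' : (r^m)^2+1 ≠ 0 := by rw [sq]; exact honem
      simp only [inv_pow]
      field_simp
      linear_combination (-1) * e1
    refine ⟨hBb, ?_⟩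
    rw [gam, al, al]
    have hone' : (r^(m+1))^2+1 ≠ 0 := by rw [sq]; exact hone
    have honem' : (r^m)^2+1 ≠ 0 := by rw [sq]; exact honem
    simp only [inv_pow]
    field_simp
    linear_combination (-(r^m*((r^(m+1))^2+1))/2) * e2
      + (-(r^m * (∑ j ∈ Finset.range (m+1), B j) * r * ((r^m)^2+1))) * e1
  constructor
  · intro n
    cases n with
    | zero =>
      have key := heq 0 2 (by norm_num) (by norm_num)
      rw [hPprev0, hP0] at key
      simp only [Dq, Sq, pl] at key
      simp at key
      rw [gam, al, ← key]
      norm_num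
    | succ m => exact (main m).1
  · intro n hn
    obtain ⟨m, rfl⟩ : ∃ m, n = m + 1 := ⟨n - 1, by omega⟩
    simpa using (main m).2
end
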